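/- arXiv:2004.00876 — 8 statements merged into one kernel-verified Lean document; each statement's English description precedes it below -/
import Mathlib

section
/- Let d ≥ 2, λ ∈ (0,1), u_λ = λ^{1/(1-d)}, and h_λ(x) = (u_λ - λ(u_λ - x)^d)/x for x ∈ (0,1). Then h_λ is decreasing on (0,1). -/
/-!
With `u = λ^{1/(1-d)}` the fixed point `λ u^d = u` says that `g x = λ (u - x)^d` satisfies
`g 0 = u`, so `h_λ x = (g 0 - g x) / x` is minus the slope of the chord of `g` from `0` to `x`.
Since `u > 1`, `g` is convex on `[0, 1]`, and the chord slopes of a convex function from a fixed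
point increase.
-/

open Real Filter Set

theorem ConvexOn.antitoneOn_sub_div {s : Set ℝ} {g : ℝ → ℝ} (hg : ConvexOn ℝ s g) (h0 : 0 ∈ s) :
    AntitoneOn (fun x => (g 0 - g x) / x) (s ∩ Ioi 0) := by
  intro x hx y hy hxy
  have slope := hg.secant_mono h0 hx.1 hy.1 hx.2.ne' hy.2.ne' hxy
  simp only [sub_zero] at slope
  show (g 0 - g y) / y ≤ (g 0 - g x) / x
  rw [← neg_sub (g x), ← neg_sub (g y), neg_div, neg_div]
  exact neg_le_neg slope

theorem convexOn_mul_sub_pow {l : ℝ} (hl : 0 ≤ l) (u : ℝ) (d : ℕ) :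
    ConvexOn ℝ (Iic u) (fun x => l * (u - x) ^ d) := by
  have reflected := (convexOn_pow d).comp_affineMap (AffineMap.const ℝ ℝ u - AffineMap.id ℝ ℝ)
  have preimage : (AffineMap.const ℝ ℝ u - AffineMap.id ℝ ℝ) ⁻¹' Ici 0 = Iic u := by
    ext x
    simp [sub_nonneg]
  rw [preimage] at reflected
  simpa [smul_eq_mul, Function.comp_def] using reflected.smul hl

theorem mul_rpow_one_div_one_sub_pow {l : ℝ} (hl : 0 < l) {d : ℕ} (hd : d ≠ 1) :
    l * (l ^ (1 / (1 - (d : ℝ)))) ^ d = l ^ (1 / (1 - (d : ℝ))) := by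
  have hne : (1 : ℝ) - d ≠ 0 := sub_ne_zero.mpr (by exact_mod_cast hd.symm)
  rw [← rpow_natCast, ← rpow_mul hl.le, ← rpow_one_add' hl.le]
  · congr 1
    field_simp
    ring
  · field_simp
    simpa using hne

theorem one_lt_rpow_one_div_one_sub {l p : ℝ} (hl : l ∈ Ioo (0 : ℝ) 1) (hp : 1 < p) :
    1 < l ^ (1 / (1 - p)) :=
  (one_lt_rpow_iff_of_pos hl.1).mpr (Or.inr ⟨hl.2, div_neg_of_pos_of_neg one_pos (by linarith)⟩)

theorem stmt_1 (d : ℕ) (hd : 2 ≤ d) (l : ℝ) (hl : l ∈ Set.Ioo (0:ℝ) 1) :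
    AntitoneOn
      (fun x : ℝ =>
        (l ^ ((1:ℝ) / (1 - (d:ℝ))) - l * (l ^ ((1:ℝ) / (1 - (d:ℝ))) - x) ^ d) / x)
      (Set.Ioo (0:ℝ) 1) := by
  set u := l ^ ((1:ℝ) / (1 - (d:ℝ)))
  have fixed : l * u ^ d = u := mul_rpow_one_div_one_sub_pow hl.1 (by omega)
  have one_le : 1 ≤ u := (one_lt_rpow_one_div_one_sub hl (by exact_mod_cast hd)).le
  have convex : ConvexOn ℝ (Icc 0 1) (fun x => l * (u - x) ^ d) :=
    (convexOn_mul_sub_pow hl.1.le u d).subset (fun x hx => hx.2.trans one_le) (convex_Icc 0 1)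
  have chord := (convex.antitoneOn_sub_div ⟨le_rfl, zero_le_one⟩).mono
    fun x hx => ⟨Ioo_subset_Icc_self hx, hx.1⟩
  simpa only [sub_zero, fixed] using chord
end

section
/- For 1 ≤ K < d integers and λ, u ∈ (0,1), the function T_λ(u) = (λ/K) Σ_{j=0}^{K-1} (K-j) C(d,j) u^{d-j} (1-u)^j satisfies T_λ(u) ≤ λu. -/
/-!
Since `K ≤ d`, the weight `K - j` is at most `(K / d) (d - j)` for every `j`, so the truncated sum
is at most `K / d` times the full sum `∑_{j<d} (d - j) C(d,j) u^(d-j) (1-u)^j`. The latter is the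
mean `d u` of a binomial `(d, u)` variable, hence the truncated sum is at most `K u`.
-/

open Real Finset

-- Bernstein's identity `∑ ν • b_{d,ν} = d • X`, reindexed by `ν = d - j`.
theorem sum_range_sub_mul_choose_mul_pow {R : Type*} [CommRing R] (d : ℕ) (u : R) :
    ∑ j ∈ range d, ((d : R) - j) * d.choose j * u ^ (d - j) * (1 - u) ^ j = d * u := by
  have hmean := congrArg (Polynomial.eval u) (bernsteinPolynomial.sum_smul R d)
  simp only [Polynomial.eval_finsetSum, bernsteinPolynomial,
    Polynomial.eval_mul, Polynomial.eval_pow, Polynomial.eval_sub, Polynomial.eval_one,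
    Polynomial.eval_X, Polynomial.eval_natCast, nsmul_eq_mul] at hmean
  rw [← sum_range_reflect, sum_range_succ] at hmean
  simp only [Nat.add_sub_cancel, Nat.sub_self, Nat.cast_zero, zero_mul, add_zero] at hmean
  rw [← hmean]
  refine sum_congr rfl fun j hj => ?_
  have hjd : j ≤ d := (mem_range.mp hj).le
  rw [Nat.choose_symm hjd, Nat.sub_sub_self hjd, Nat.cast_sub hjd]
  ring

theorem mul_sum_range_sub_mul_le {b : ℕ → ℝ} (hb : ∀ j, 0 ≤ b j) {K d : ℕ} (hKd : K ≤ d) :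
    (d : ℝ) * ∑ j ∈ range K, ((K : ℝ) - j) * b j
      ≤ K * ∑ j ∈ range d, ((d : ℝ) - j) * b j := by
  rw [mul_sum, mul_sum]
  calc ∑ j ∈ range K, (d : ℝ) * (((K : ℝ) - j) * b j)
      ≤ ∑ j ∈ range K, (K : ℝ) * (((d : ℝ) - j) * b j) := by
        refine sum_le_sum fun j _ => ?_
        have hKd' : (K : ℝ) ≤ d := by exact_mod_cast hKd
        -- `K (d - j) - d (K - j) = j (d - K)`
        have : (d : ℝ) * (K - j) ≤ K * (d - j) := by nlinarith [(j.cast_nonneg : (0 : ℝ) ≤ j)]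
        simpa only [mul_assoc] using mul_le_mul_of_nonneg_right this (hb j)
    _ ≤ ∑ j ∈ range d, (K : ℝ) * (((d : ℝ) - j) * b j) := by
        refine sum_le_sum_of_subset_of_nonneg (range_subset_range.mpr hKd) fun j hj _ => ?_
        have : (j : ℝ) ≤ d := by exact_mod_cast (mem_range.mp hj).le
        have := hb j
        positivity

theorem sum_range_sub_mul_choose_mul_pow_le {K d : ℕ} (hKd : K ≤ d) {u : ℝ}
    (hu₀ : 0 ≤ u) (hu₁ : u ≤ 1) :
    ∑ j ∈ range K, ((K : ℝ) - j) * d.choose j * u ^ (d - j) * (1 - u) ^ j ≤ K * u := by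
  set b : ℕ → ℝ := fun j => d.choose j * u ^ (d - j) * (1 - u) ^ j
  have hb : ∀ j, 0 ≤ b j := fun j => by
    have : 0 ≤ 1 - u := by linarith
    positivity
  have hsum : ∀ n : ℕ, ∑ j ∈ range n, ((n : ℝ) - j) * d.choose j * u ^ (d - j) * (1 - u) ^ j
      = ∑ j ∈ range n, ((n : ℝ) - j) * b j := fun n => sum_congr rfl fun j _ => by ring
  rcases Nat.eq_zero_or_pos d with rfl | hd
  · simp [Nat.le_zero.mp hKd]
  have key := mul_sum_range_sub_mul_le hb hKd
  rw [← hsum, ← hsum, sum_range_sub_mul_choose_mul_pow] at key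
  have hd' : (0 : ℝ) < d := by exact_mod_cast hd
  nlinarith

theorem stmt_5_general (K d : ℕ) (hKd : K < d)
    (l u : ℝ) (hl : l ∈ Set.Ioo (0:ℝ) 1) (hu : u ∈ Set.Ioo (0:ℝ) 1) :
    (l / K) * ∑ j ∈ Finset.range K,
        ((K:ℝ) - j) * (d.choose j) * u ^ (d - j) * (1 - u) ^ j ≤ l * u := by
  have hl₀ : 0 ≤ l := hl.1.le
  have hu₀ : 0 ≤ u := hu.1.le
  calc (l / K) * ∑ j ∈ range K, ((K:ℝ) - j) * (d.choose j) * u ^ (d - j) * (1 - u) ^ j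
      ≤ (l / K) * (K * u) := by
        gcongr
        exact sum_range_sub_mul_choose_mul_pow_le hKd.le hu₀ hu.2.le
    _ ≤ l * u := by
        rcases eq_or_ne (K : ℝ) 0 with hK | hK
        · rw [hK, div_zero, zero_mul]
          positivity
        · rw [div_mul_eq_mul_div, mul_div_assoc, mul_div_cancel_left₀ _ hK]

theorem stmt_5 (K d : ℕ) (hK : 1 ≤ K) (hKd : K < d)
    (l u : ℝ) (hl : l ∈ Set.Ioo (0:ℝ) 1) (hu : u ∈ Set.Ioo (0:ℝ) 1) :
    (l / K) * ∑ j ∈ Finset.range K,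
        ((K:ℝ) - j) * (d.choose j) * u ^ (d - j) * (1 - u) ^ j ≤ l * u :=
  stmt_5_general K d hKd l u hl hu
end

section
/- For 1 ≤ K < d integers, λ ∈ (0,1), and u ∈ (0,1), the derivative of u ↦ T_λ(u)/u is strictly positive, where T_λ(u) = (λ/K) Σ_{j=0}^{K-1} (K-j) C(d,j) u^{d-j} (1-u)^j. Equivalently, (T_λ(u)/u)' = (d-K)(λ/K) u^{d-2} Σ_{j=0}^{K-1} C(d,j) ((1-u)/u)^j > 0. -/
/-!
For `v ≠ 0` the quotient is `(λ/K) ∑_{j<K} (K-j) C(d,j) v^(d-1-j) (1-v)^j`, which we differentiate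
term by term. Thanks to `(j+1) C(d,j+1) = (d-j) C(d,j)` the derivative telescopes to
`(d-K)(λ/K) ∑_{j<K} C(d,j) u^(d-2-j) (1-u)^j`; this is positive for `u ∈ (0,1)` because its
`j = 0` term is and the others are nonnegative.
-/

open Real Finset

theorem hasDerivAt_pow_mul_one_sub_pow {𝕜 : Type*} [NontriviallyNormedField 𝕜] (m j : ℕ)
    (u : 𝕜) :
    HasDerivAt (fun v : 𝕜 => v ^ m * (1 - v) ^ j)
      (m * u ^ (m - 1) * (1 - u) ^ j - j * u ^ m * (1 - u) ^ (j - 1)) u :=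
  ((hasDerivAt_pow m u).fun_mul (((hasDerivAt_id' u).const_sub 1).fun_pow j)).congr_deriv
    (by ring)

theorem sum_range_sub_mul_choose_deriv_eq {R : Type*} [CommRing R] {K d : ℕ} (hKd : K < d)
    (x y : R) :
    ∑ j ∈ range K, ((K : R) - j) * d.choose j *
        ((d - 1 - j : ℕ) * x ^ (d - 2 - j) * y ^ j - j * x ^ (d - 1 - j) * y ^ (j - 1)) =
      ((d : R) - K) * ∑ j ∈ range K, d.choose j * x ^ (d - 2 - j) * y ^ j := by
  set Q : ℕ → R := fun j => ((K : R) - j) * j * d.choose j * x ^ (d - 1 - j) * y ^ (j - 1)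
  have hterm : ∀ j ∈ range K, ((K : R) - j) * d.choose j *
        ((d - 1 - j : ℕ) * x ^ (d - 2 - j) * y ^ j - j * x ^ (d - 1 - j) * y ^ (j - 1)) =
      ((d : R) - K) * (d.choose j * x ^ (d - 2 - j) * y ^ j) + (Q (j + 1) - Q j) := by
    intro j hj
    have hjd : j + 2 ≤ d := by have := mem_range.mp hj; omega
    have hchoose : ((j : R) + 1) * d.choose (j + 1) = ((d : R) - j) * d.choose j := by
      have h := congrArg (Nat.cast : ℕ → R) (Nat.choose_succ_right_eq d j)
      push_cast [Nat.cast_sub (by omega : j ≤ d)] at h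
      linear_combination h
    have hx : x ^ (d - 1 - j) = x ^ (d - 2 - j) * x := by
      rw [← pow_succ]; congr 1; omega
    have hcast : ((d - 1 - j : ℕ) : R) = d - 1 - j := by
      rw [Nat.sub_sub, Nat.cast_sub (by omega)]; push_cast; ring
    simp only [Q, hx, hcast, Nat.add_sub_cancel, show d - 1 - (j + 1) = d - 2 - j by omega]
    push_cast
    linear_combination (-((K : R) - j - 1) * x ^ (d - 2 - j) * y ^ j) * hchoose
  have hQK : Q K = 0 := by simp [Q]
  have hQ0 : Q 0 = 0 := by simp [Q]
  rw [sum_congr rfl hterm, sum_add_distrib, sum_range_sub, hQK, hQ0, ← mul_sum]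
  ring

theorem pow_mul_div_pow_eq {𝕜 : Type*} [Field 𝕜] {x : 𝕜} (y : 𝕜) (hx : x ≠ 0) {n j : ℕ}
    (hj : j ≤ n) : x ^ n * (y / x) ^ j = x ^ (n - j) * y ^ j := by
  obtain ⟨k, rfl⟩ := Nat.exists_eq_add_of_le hj
  rw [Nat.add_sub_cancel_left, div_pow, pow_add]
  field_simp

theorem sum_range_mul_pow_div_eq {K d : ℕ} (hKd : K < d) {v : ℝ} (hv : v ≠ 0) :
    (∑ j ∈ range K, ((K:ℝ) - j) * d.choose j * v ^ (d - j) * (1 - v) ^ j) / v =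
      ∑ j ∈ range K, ((K:ℝ) - j) * d.choose j * (v ^ (d - 1 - j) * (1 - v) ^ j) := by
  rw [div_eq_iff hv, sum_mul]
  refine sum_congr rfl fun j hj => ?_
  rw [show d - j = d - 1 - j + 1 by have := mem_range.mp hj; omega, pow_succ]
  ring

theorem pow_mul_sum_choose_mul_div_pow_eq {K d : ℕ} (hKd : K < d) {u : ℝ} (hu : u ≠ 0) :
    u ^ (d - 2) * ∑ j ∈ range K, (d.choose j : ℝ) * ((1 - u) / u) ^ j =
      ∑ j ∈ range K, (d.choose j : ℝ) * u ^ (d - 2 - j) * (1 - u) ^ j := by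
  rw [mul_sum]
  refine sum_congr rfl fun j hj => ?_
  rw [mul_left_comm, pow_mul_div_pow_eq _ hu (by have := mem_range.mp hj; omega)]
  ring

theorem sum_range_choose_mul_pow_pos {K : ℕ} (hK : 0 < K) (d : ℕ) {t : ℝ} (ht : 0 ≤ t) :
    0 < ∑ j ∈ range K, (d.choose j : ℝ) * t ^ j :=
  sum_pos' (fun j _ => by positivity) ⟨0, mem_range.mpr hK, by simp⟩

theorem stmt_6 (K d : ℕ) (hK : 1 ≤ K) (hKd : K < d)
    (l u : ℝ) (hl : l ∈ Set.Ioo (0:ℝ) 1) (hu : u ∈ Set.Ioo (0:ℝ) 1) :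
    HasDerivAt
      (fun v : ℝ =>
        ((l / K) * ∑ j ∈ Finset.range K,
            ((K:ℝ) - j) * (d.choose j) * v ^ (d - j) * (1 - v) ^ j) / v)
      (((d:ℝ) - K) * (l / K) * u ^ (d - 2) *
        ∑ j ∈ Finset.range K, (d.choose j) * ((1 - u) / u) ^ j) u ∧
    0 < ((d:ℝ) - K) * (l / K) * u ^ (d - 2) *
        ∑ j ∈ Finset.range K, (d.choose j) * ((1 - u) / u) ^ j := by
  obtain ⟨hu0, hu1⟩ := hu
  have hdiv : (fun v : ℝ => ((l / K) * ∑ j ∈ range K,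
        ((K:ℝ) - j) * d.choose j * v ^ (d - j) * (1 - v) ^ j) / v) =ᶠ[nhds u]
      fun v => (l / K) *
        ∑ j ∈ range K, ((K:ℝ) - j) * d.choose j * (v ^ (d - 1 - j) * (1 - v) ^ j) := by
    filter_upwards [eventually_ne_nhds hu0.ne'] with v hv
    rw [mul_div_assoc, sum_range_mul_pow_div_eq hKd hv]
  have hderiv := ((HasDerivAt.fun_sum fun j _ =>
      (hasDerivAt_pow_mul_one_sub_pow (d - 1 - j) j u).const_mul
        (((K:ℝ) - j) * d.choose j)).const_mul (l / K)).congr_of_eventuallyEq hdiv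
  refine ⟨hderiv.congr_deriv ?_, ?_⟩
  · rw [mul_assoc _ (u ^ (d - 2)), pow_mul_sum_choose_mul_div_pow_eq hKd hu0.ne',
      mul_comm _ (l / K), mul_assoc, ← sum_range_sub_mul_choose_deriv_eq hKd]
    simp_rw [show ∀ j, d - 1 - j - 1 = d - 2 - j from fun j => by omega]
  · have hdK : (0:ℝ) < d - K := sub_pos.mpr (by exact_mod_cast hKd)
    have hlK : 0 < l / K := div_pos hl.1 (by exact_mod_cast hK)
    exact mul_pos (mul_pos (mul_pos hdK hlK) (pow_pos hu0 _))
      (sum_range_choose_mul_pow_pos hK d (div_nonneg (by linarith) hu0.le))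
end

section
/- For integers 1 ≤ K < d, define Θ(u) = (1/K) Σ_{j=0}^{K-1} (K-j) C(d,j) u^{d-j-1} (1-u)^j. Then for 1 ≤ n ≤ K, the n-th derivative of Θ at u = 1 equals (-1)^{n+1} n! (d-K)/K. -/
/-!
Write `T = K Θ`. Since the Bernstein basis sums to `1` and has mean `d (1 - u)`, the full sum
`∑_{j ≤ d} (K - j) C(d,j) u^{d-j} (1-u)^j` equals `K - d (1 - u)`; the terms with `j ≥ K`
that `T` omits are divisible by `(1 - u)^{K+1}` (the term `j = K` vanishes). Hence
`u (T(u) - d) ≡ K - d  mod (u - 1)^{K+1}`, and in the Taylor coordinate `u = 1 + x` this reads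
`(1 + x) (T(1 + x) - d) ≡ K - d  mod x^{K+1}`. So the Taylor coefficient of `T` at `1` of order
`n ∈ [1, K]` is `(-1)^n (K - d)`, and `T^{(n)}(1)` is `n!` times that.
-/

open Real Finset

open Polynomial

namespace Polynomial

section Calculus

variable {𝕜 : Type*} [NontriviallyNormedField 𝕜]

theorem iteratedDeriv_eval (p : 𝕜[X]) (n : ℕ) :
    iteratedDeriv n (fun x => p.eval x) = fun x => (derivative^[n] p).eval x := by
  induction n with
  | zero => simp
  | succ n ih =>
    funext x
    rw [iteratedDeriv_succ, ih, Function.iterate_succ_apply']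
    exact Polynomial.deriv _

theorem iteratedDeriv_eval_eq_factorial_mul_taylor_coeff (p : 𝕜[X]) (n : ℕ) (a : 𝕜) :
    iteratedDeriv n (fun x => p.eval x) a = n.factorial * (taylor a p).coeff n := by
  rw [iteratedDeriv_eval, taylor_coeff, ← factorial_smul_hasseDeriv]
  simp

end Calculus

variable {R : Type*} [CommRing R]

theorem coeff_eq_neg_one_pow_mul_of_X_pow_dvd {F : R[X]} {c : R} {N : ℕ}
    (h : X ^ (N + 1) ∣ (X + 1) * F - C c) {n : ℕ} (hn : n ≤ N) :
    F.coeff n = (-1) ^ n * c := by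
  rw [X_pow_dvd_iff] at h
  induction n with
  | zero => simpa [add_mul, sub_eq_zero] using h 0 (by omega)
  | succ n ih =>
    have hrec := h (n + 1) (by omega)
    simp only [add_mul, one_mul, coeff_sub, coeff_add, coeff_X_mul, coeff_C_succ, sub_zero] at hrec
    rw [pow_succ]
    linear_combination hrec - ih (by omega)

theorem sum_sub_mul_bernsteinPolynomial (K d : ℕ) :
    ∑ ν ∈ range (d + 1), ((K : R[X]) - (ν : R[X])) * bernsteinPolynomial R d ν =
      (K : R[X]) - (d : R[X]) * X := by
  have h := bernsteinPolynomial.sum_smul (R := R) d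
  simp only [nsmul_eq_mul] at h
  rw [← h]
  simp only [sub_mul, sum_sub_distrib, ← mul_sum, bernsteinPolynomial.sum, mul_one]

end Polynomial

/-- `K Θ`, as a polynomial. -/
noncomputable def thetaPoly (R : Type*) [CommRing R] (K d : ℕ) : R[X] :=
  ∑ j ∈ range K, ((K : R[X]) - (j : R[X])) * (d.choose j : R[X]) * X ^ (d - j - 1) * (1 - X) ^ j

section thetaPoly

variable {R : Type*} [CommRing R]

theorem sum_sub_mul_choose_mul_pow_mul_one_sub_pow (K d : ℕ) :
    ∑ j ∈ range (d + 1), ((K : R[X]) - (j : R[X])) *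
      ((d.choose j : R[X]) * X ^ (d - j) * (1 - X) ^ j) = (K : R[X]) - (d : R[X]) * (1 - X) := by
  have := congrArg (·.comp (1 - X)) (sum_sub_mul_bernsteinPolynomial (R := R) K d)
  simp only [Polynomial.sum_comp, mul_comp, sub_comp, natCast_comp, bernsteinPolynomial, pow_comp,
    X_comp, one_comp, sub_sub_cancel] at this
  rw [← this]
  exact sum_congr rfl fun j _ => by ring

theorem X_sub_one_pow_dvd_X_mul_thetaPoly {K d : ℕ} (hKd : K ≤ d) :
    (X - 1) ^ (K + 1) ∣ X * (thetaPoly R K d - (d : R[X])) - ((K : R[X]) - (d : R[X])) := by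
  set b : ℕ → R[X] := fun j => (d.choose j : R[X]) * X ^ (d - j) * (1 - X) ^ j
  have hX : X * thetaPoly R K d = ∑ j ∈ range K, ((K : R[X]) - (j : R[X])) * b j := by
    rw [thetaPoly, mul_sum]
    refine sum_congr rfl fun j hj => ?_
    obtain ⟨m, hm⟩ : ∃ m, d - j = m + 1 := ⟨d - j - 1, by grind⟩
    simp only [b, hm, Nat.add_sub_cancel]
    ring
  have hsplit :=
    sum_range_add_sum_Ico (fun j => ((K : R[X]) - (j : R[X])) * b j) (by omega : K ≤ d + 1)
  rw [sum_sub_mul_choose_mul_pow_mul_one_sub_pow, ← hX] at hsplit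
  have htail : X * (thetaPoly R K d - (d : R[X])) - ((K : R[X]) - (d : R[X])) =
      -∑ j ∈ Ico K (d + 1), ((K : R[X]) - (j : R[X])) * b j := by
    linear_combination hsplit
  rw [htail, dvd_neg]
  refine dvd_sum fun j hj => ?_
  obtain rfl | hKj := eq_or_lt_of_le (mem_Ico.mp hj).1
  · simp
  · refine Dvd.dvd.mul_left (Dvd.dvd.mul_left ?_ _) _
    exact (pow_dvd_pow _ hKj).trans (pow_dvd_pow_of_dvd (dvd_sub_comm.mp dvd_rfl) j)

theorem coeff_taylor_one_thetaPoly {K d n : ℕ} (hKd : K ≤ d) (hn : n ≠ 0) (hnK : n ≤ K) :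
    (taylor 1 (thetaPoly R K d)).coeff n = (-1) ^ n * ((K : R) - d) := by
  have hdvd :
      X ^ (K + 1) ∣ (X + 1) * taylor 1 (thetaPoly R K d - (d : R[X])) - C ((K : R) - d) := by
    simpa [taylor_apply] using
      map_dvd (taylorAlgHom (1 : R)) (X_sub_one_pow_dvd_X_mul_thetaPoly hKd)
  simpa [taylor_apply, coeff_C, hn] using coeff_eq_neg_one_pow_mul_of_X_pow_dvd hdvd hnK

end thetaPoly

theorem stmt_8_general (K d : ℕ) (hKd : K < d)
    (Θ : ℝ → ℝ)
    (hΘ : Θ = fun u : ℝ => (1 / K) * ∑ j ∈ Finset.range K,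
        ((K:ℝ) - j) * (d.choose j) * u ^ (d - j - 1) * (1 - u) ^ j) :
    ∀ n : ℕ, 1 ≤ n → n ≤ K →
      iteratedDeriv n Θ 1 = (-1) ^ (n + 1) * (n.factorial : ℝ) * ((d:ℝ) - K) / K := by
  intro n hn hnK
  have hΘ' : Θ = fun u => (1 / K) * (thetaPoly ℝ K d).eval u := by
    simp [hΘ, thetaPoly, eval_finsetSum]
  rw [hΘ', iteratedDeriv_const_mul_field, iteratedDeriv_eval_eq_factorial_mul_taylor_coeff,
    coeff_taylor_one_thetaPoly hKd.le (by omega) hnK]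
  ring

theorem stmt_8 (K d : ℕ) (hK : 1 ≤ K) (hKd : K < d)
    (Θ : ℝ → ℝ)
    (hΘ : Θ = fun u : ℝ => (1 / K) * ∑ j ∈ Finset.range K,
        ((K:ℝ) - j) * (d.choose j) * u ^ (d - j - 1) * (1 - u) ^ j) :
    ∀ n : ℕ, 1 ≤ n → n ≤ K →
      iteratedDeriv n Θ 1 = (-1) ^ (n + 1) * (n.factorial : ℝ) * ((d:ℝ) - K) / K :=
  stmt_8_general K d hKd Θ hΘ
end

section
/- For integers p_i ≥ 0 with Σ p_i = 1 (probability weights), d_i ≥ 1, Σ p_i d_i > 1, and λ ∈ (0,1), the equation u = λ Σ_i p_i u^{d_i} has exactly one solution u_λ in (1,∞), and u_λ → 1 as λ → 1⁻. -/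
/-!
Let `f(u) = ∑ pᵢ u^{dᵢ}` and `g_λ(u) = λ f(u) - u`, a convex function with `g_λ(1) = λ - 1 < 0`.
Since `f'(1) = ∑ pᵢ dᵢ > 1`, some `dⱼ ≥ 2` carries positive weight, so `g_λ` is eventually positive
and has a root in `(1, ∞)`; by convexity `g_λ` is negative strictly between `1` and any root,
so the root is unique. By Bernoulli's inequality `f(v) > v` for every `v > 1`, hence `g_λ(v) > 0`
for `λ` close to `1`, which forces the root below `v`.
-/

open Filter Set Topology

theorem convexOn_sum {ι : Type*} {s : Set ℝ} (hs : Convex ℝ s) (t : Finset ι) {f : ι → ℝ → ℝ}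
    (hf : ∀ i ∈ t, ConvexOn ℝ s (f i)) : ConvexOn ℝ s (fun u => ∑ i ∈ t, f i u) := by
  induction t using Finset.cons_induction with
  | empty => simpa using convexOn_const 0 hs
  | cons i t hi ih =>
    simp only [Finset.sum_cons]
    exact (hf i (Finset.mem_cons_self _ _)).add
      (ih fun j hj => hf j (Finset.mem_cons_of_mem hj))

theorem ConvexOn.neg_of_neg_of_nonpos {s : Set ℝ} {g : ℝ → ℝ} (hg : ConvexOn ℝ s g)
    {a x y : ℝ} (ha : a ∈ s) (hy : y ∈ s) (hax : a < x) (hxy : x < y)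
    (hga : g a < 0) (hgy : g y ≤ 0) : g x < 0 := by
  by_contra! hgx
  have hslope := hg.slope_mono_adjacent ha hy hax hxy
  have hleft : 0 < (g x - g a) / (x - a) := div_pos (by linarith) (by linarith)
  have hright : (g y - g x) / (y - x) ≤ 0 :=
    div_nonpos_of_nonpos_of_nonneg (by linarith) (by linarith)
  linarith

section ProbabilityGeneratingFunction

variable {ι : Type*} [Fintype ι] {p : ι → ℝ} {d : ι → ℕ}

def pgf (p : ι → ℝ) (d : ι → ℕ) (u : ℝ) : ℝ := ∑ i, p i * u ^ d i

theorem pgf_one (hp1 : ∑ i, p i = 1) : pgf p d 1 = 1 := by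
  simp [pgf, hp1]

theorem continuous_pgf : Continuous (pgf p d) := by
  unfold pgf; fun_prop

theorem convexOn_mul_pgf (hp : ∀ i, 0 ≤ p i) {l : ℝ} (hl : 0 ≤ l) :
    ConvexOn ℝ (Ici 0) (fun u => l * pgf p d u) := by
  simp only [pgf, Finset.mul_sum, ← mul_assoc]
  exact convexOn_sum (convex_Ici 0) _ fun i _ => (convexOn_pow (d i)).smul (mul_nonneg hl (hp i))

theorem one_add_mul_le_pgf (hp : ∀ i, 0 ≤ p i) (hp1 : ∑ i, p i = 1) {u : ℝ} (hu : -1 ≤ u) :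
    1 + (u - 1) * ∑ i, p i * d i ≤ pgf p d u := by
  have hbernoulli (i : ι) : p i * (1 + d i * (u - 1)) ≤ p i * u ^ d i := by
    have := one_add_mul_le_pow (a := u - 1) (by linarith) (d i)
    exact mul_le_mul_of_nonneg_left (by simpa using this) (hp i)
  calc 1 + (u - 1) * ∑ i, p i * d i = ∑ i, p i * (1 + d i * (u - 1)) := by
        simp only [mul_add, mul_one, Finset.sum_add_distrib, hp1, Finset.mul_sum]
        congr 1; refine Finset.sum_congr rfl fun i _ => ?_; ring
    _ ≤ pgf p d u := Finset.sum_le_sum fun i _ => hbernoulli i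

theorem lt_pgf_of_one_lt (hp : ∀ i, 0 ≤ p i) (hp1 : ∑ i, p i = 1)
    (hpd : 1 < ∑ i, p i * (d i : ℝ)) {v : ℝ} (hv : 1 < v) : v < pgf p d v := by
  have := one_add_mul_le_pgf hp hp1 (d := d) (u := v) (by linarith)
  nlinarith

theorem exists_pos_weight_two_le (hp : ∀ i, 0 ≤ p i) (hp1 : ∑ i, p i = 1)
    (hpd : 1 < ∑ i, p i * (d i : ℝ)) : ∃ j, 0 < p j ∧ 2 ≤ d j := by
  by_contra! h
  have hle : ∑ i, p i * (d i : ℝ) ≤ ∑ i, p i := by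
    refine Finset.sum_le_sum fun i _ => ?_
    rcases (hp i).lt_or_eq with hpi | hpi
    · have : (d i : ℝ) ≤ 1 := by exact_mod_cast Nat.lt_succ_iff.mp (h i hpi)
      nlinarith
    · simp [← hpi]
  linarith

theorem exists_one_lt_le_mul_pgf (hp : ∀ i, 0 ≤ p i) (hp1 : ∑ i, p i = 1)
    (hpd : 1 < ∑ i, p i * (d i : ℝ)) {l : ℝ} (hl : 0 < l) :
    ∃ B, 1 < B ∧ B ≤ l * pgf p d B := by
  obtain ⟨j, hpj, hdj⟩ := exists_pos_weight_two_le hp hp1 hpd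
  have hc : 0 < l * p j := mul_pos hl hpj
  -- `l pⱼ B ≥ 1` makes the single term `l pⱼ B^{dⱼ} ≥ l pⱼ B²` exceed `B`.
  set B : ℝ := max 2 (1 / (l * p j))
  have hB2 : 2 ≤ B := le_max_left _ _
  have hBc : 1 ≤ l * p j * B := by
    have := (div_le_iff₀ hc).mp (le_max_right 2 (1 / (l * p j)))
    linarith
  refine ⟨B, by linarith, ?_⟩
  have hterm : p j * B ^ d j ≤ pgf p d B :=
    Finset.single_le_sum (f := fun i => p i * B ^ d i)
      (fun i _ => mul_nonneg (hp i) (pow_nonneg (by linarith) _)) (Finset.mem_univ j)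
  have hpow : B ^ 2 ≤ B ^ d j := pow_le_pow_right₀ (by linarith) hdj
  calc B ≤ l * p j * B * B := by nlinarith
    _ ≤ l * (p j * B ^ d j) := by nlinarith
    _ ≤ l * pgf p d B := mul_le_mul_of_nonneg_left hterm hl.le

theorem le_of_eq_mul_pgf_of_le_mul_pgf (hp : ∀ i, 0 ≤ p i) (hp1 : ∑ i, p i = 1) {l : ℝ}
    (hl0 : 0 ≤ l) (hl1 : l < 1) {u v : ℝ} (hu : u = l * pgf p d u) (hv1 : 1 < v)
    (hv : v ≤ l * pgf p d v) : u ≤ v := by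
  by_contra! hvu
  have hg : ConvexOn ℝ (Ici 0) (fun x => l * pgf p d x - x) :=
    (convexOn_mul_pgf hp hl0).sub (concaveOn_id (convex_Ici 0))
  have hg1 : l * pgf p d 1 - 1 < 0 := by rw [pgf_one hp1]; linarith
  have := hg.neg_of_neg_of_nonpos (mem_Ici.2 zero_le_one) (mem_Ici.2 (by linarith)) hv1 hvu hg1
    (by linarith)
  linarith

end ProbabilityGeneratingFunction

theorem stmt_12_general (n : ℕ)
    (p : Fin n → ℝ) (hp : ∀ i, 0 ≤ p i) (hp1 : ∑ i, p i = 1)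
    (d : Fin n → ℕ) (hpd : 1 < ∑ i, p i * (d i : ℝ)) :
    (∀ l : ℝ, l ∈ Set.Ioo (0:ℝ) 1 →
      ∃! u : ℝ, u ∈ Set.Ioi (1:ℝ) ∧ u = l * ∑ i, p i * u ^ d i) ∧
    (∀ uf : ℝ → ℝ,
      (∀ l ∈ Set.Ioo (0:ℝ) 1,
        uf l ∈ Set.Ioi (1:ℝ) ∧ uf l = l * ∑ i, p i * uf l ^ d i) →
      Filter.Tendsto uf (nhdsWithin 1 (Set.Iio 1)) (nhds 1)) := by
  have hroot_le {l u v : ℝ} (hl : l ∈ Ioo 0 1) (hu : u = l * pgf p d u)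
      (hv : 1 < v ∧ v ≤ l * pgf p d v) : u ≤ v :=
    le_of_eq_mul_pgf_of_le_mul_pgf hp hp1 hl.1.le hl.2 hu hv.1 hv.2
  constructor
  · rintro l hl
    obtain ⟨B, hB1, hB⟩ := exists_one_lt_le_mul_pgf hp hp1 hpd hl.1
    have hcont : ContinuousOn (fun u => l * pgf p d u - u) (Icc 1 B) :=
      ((continuous_pgf.const_mul l).sub continuous_id).continuousOn
    have hsign : (0 : ℝ) ∈ Ioc (l * pgf p d 1 - 1) (l * pgf p d B - B) := by
      rw [pgf_one hp1]; exact ⟨by linarith [hl.2], by linarith⟩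
    obtain ⟨u, ⟨hu1, -⟩, hu⟩ := intermediate_value_Ioc hB1.le hcont hsign
    have hfix : 1 < u ∧ u = l * pgf p d u := ⟨hu1, by linarith [hu]⟩
    exact ⟨u, hfix, fun v hv => le_antisymm (hroot_le hl hv.2 ⟨hfix.1, hfix.2.le⟩)
      (hroot_le hl hfix.2 ⟨hv.1, hv.2.le⟩)⟩
  · intro uf huf
    have hmem : ∀ᶠ l in 𝓝[<] (1 : ℝ), l ∈ Ioo 0 1 := Ioo_mem_nhdsLT one_pos
    refine tendsto_order.2
      ⟨fun a ha => hmem.mono fun l hl => ha.trans (huf l hl).1, fun a ha => ?_⟩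
    obtain ⟨v, hv1, hva⟩ := exists_between ha
    have hlim : Tendsto (fun l => l * pgf p d v) (𝓝[<] 1) (𝓝 (pgf p d v)) := by
      simpa using (tendsto_id.mul_const (pgf p d v)).mono_left (nhdsWithin_le_nhds (a := (1 : ℝ)))
    have hsuper : ∀ᶠ l in 𝓝[<] 1, v < l * pgf p d v :=
      hlim.eventually (lt_mem_nhds (lt_pgf_of_one_lt hp hp1 hpd hv1))
    filter_upwards [hmem, hsuper] with l hl hlv
    exact (hroot_le hl (huf l hl).2 ⟨hv1, hlv.le⟩).trans_lt hva

theorem stmt_12 (n : ℕ) (hn : 1 ≤ n)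
    (p : Fin n → ℝ) (hp : ∀ i, 0 ≤ p i) (hp1 : ∑ i, p i = 1)
    (d : Fin n → ℕ) (hd : ∀ i, 1 ≤ d i) (hpd : 1 < ∑ i, p i * (d i : ℝ)) :
    (∀ l : ℝ, l ∈ Set.Ioo (0:ℝ) 1 →
      ∃! u : ℝ, u ∈ Set.Ioi (1:ℝ) ∧ u = l * ∑ i, p i * u ^ d i) ∧
    (∀ uf : ℝ → ℝ,
      (∀ l ∈ Set.Ioo (0:ℝ) 1,
        uf l ∈ Set.Ioi (1:ℝ) ∧ uf l = l * ∑ i, p i * uf l ^ d i) →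
      Filter.Tendsto uf (nhdsWithin 1 (Set.Iio 1)) (nhds 1)) :=
  stmt_12_general n p hp hp1 d hpd
end

section
/- Fix an integer d_i ≥ 1 and u_λ > 1. The function ξ(x) = (u_λ^{d_i} − (u_λ − x)^{d_i})/x is decreasing on [u_λ − 1, u_λ]. -/
open Real Set

/-! By the factorisation `a ^ n - b ^ n = (a - b) * ∑ i < n, a ^ i * b ^ (n - 1 - i)` with
`a = u` and `b = u - x`, the quotient is a sum of products of powers of `u` and `u - x` with
nonnegative bases, and each summand decreases as `x` grows in `(0, u]`. -/

theorem pow_sub_pow_sub_div_eq_geom_sum₂ {K : Type*} [Field K] (u : K) {x : K} (hx : x ≠ 0)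
    (n : ℕ) :
    (u ^ n - (u - x) ^ n) / x = ∑ i ∈ Finset.range n, u ^ i * (u - x) ^ (n - 1 - i) := by
  rw [geom₂_sum (Ne.symm (mt sub_eq_self.1 hx)), sub_sub_cancel]

theorem antitoneOn_pow_sub_pow_sub_div (u : ℝ) (n : ℕ) :
    AntitoneOn (fun x : ℝ => (u ^ n - (u - x) ^ n) / x) (Ioc 0 u) := by
  intro a ha b hb hab
  have hu : 0 ≤ u := ha.1.le.trans ha.2
  have hub : 0 ≤ u - b := sub_nonneg.2 hb.2
  simp only [pow_sub_pow_sub_div_eq_geom_sum₂ u ha.1.ne',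
    pow_sub_pow_sub_div_eq_geom_sum₂ u hb.1.ne']
  gcongr

theorem stmt_13_general (dᵢ : ℕ) (u : ℝ) (hu : 1 < u) :
    AntitoneOn (fun x : ℝ => (u ^ dᵢ - (u - x) ^ dᵢ) / x) (Set.Icc (u - 1) u) :=
  (antitoneOn_pow_sub_pow_sub_div u dᵢ).mono fun _ hx => ⟨by linarith [hx.1], hx.2⟩

theorem stmt_13 (dᵢ : ℕ) (hd : 1 ≤ dᵢ) (u : ℝ) (hu : 1 < u)
    (hconv : 1 + (u - 1) * dᵢ - u ^ dᵢ ≤ 0) :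
    AntitoneOn (fun x : ℝ => (u ^ dᵢ - (u - x) ^ dᵢ) / x) (Set.Icc (u - 1) u) :=
  stmt_13_general dᵢ u hu
end

section
/- For d ≥ 2, p ∈ (0,1], λ ∈ (0,1), let z = pλ^d/(1−(1−p)λ) and Q = (λ/(1−(1−p)λ)) Σ_{n≥0} z^n/(1+n(d−1)) and Q̃ = (λ/(1−(1−p)λ))(1 + log((1−(1−p)λ)/(1−(1−p)λ−pλ^d))/(d−1)). Then Q̃ − (λ^{d+1}/(p(d−1)²(1−(1−p)λ)²))·π²/6 ≤ Q ≤ Q̃. -/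
open Real

/-!
With `D = d - 1`, comparing `1 / (1 + n D)` with `1 / (n D)` termwise against the logarithmic
series `∑ zⁿ / n = -log (1 - z)` gives `∑ zⁿ / (1 + n D) ≤ 1 - log (1 - z) / D`, and
`1 - z = (1 - (1 - p) λ - p λ^d) / (1 - (1 - p) λ)` turns this into `Q ≤ Q̃`.
Conversely `1 / (n D) - 1 / (1 + n D) ≤ 1 / (n² D²)` and `zⁿ ≤ z` bound the gap by
`z π² / (6 D²)`, and `λ z / (1 - (1 - p) λ) = p λ^(d+1) / (1 - (1 - p) λ)² ≤ λ^(d+1) / (p (1 - (1 - p) λ)²)`.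
-/

lemma hasSum_one_div_nat_succ_sq :
    HasSum (fun n : ℕ => 1 / ((n : ℝ) + 1) ^ 2) (π ^ 2 / 6) := by
  have h := (hasSum_nat_add_iff' (f := fun n : ℕ => (1 : ℝ) / (n : ℝ) ^ 2) 1).mpr hasSum_zeta_two
  simpa using h

section LogSeries

variable {z D : ℝ}

lemma hasSum_pow_succ_div_succ_mul (hz : |z| < 1) :
    HasSum (fun n : ℕ => z ^ (n + 1) / ((n + 1) * D)) (-log (1 - z) / D) := by
  simpa only [div_div] using (hasSum_pow_div_log_of_abs_lt_one hz).div_const D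

lemma summable_pow_div_one_add_mul (hz0 : 0 ≤ z) (hz1 : z < 1) (hD : 0 ≤ D) :
    Summable fun n : ℕ => z ^ n / (1 + n * D) :=
  (summable_geometric_of_lt_one hz0 hz1).of_nonneg_of_le (fun n => by positivity)
    fun n => div_le_self (by positivity) (by nlinarith [n.cast_nonneg (α := ℝ)])

lemma tsum_pow_div_one_add_mul_eq_one_add (hz0 : 0 ≤ z) (hz1 : z < 1) (hD : 0 ≤ D) :
    ∑' n : ℕ, z ^ n / (1 + n * D) = 1 + ∑' n : ℕ, z ^ (n + 1) / (1 + (n + 1) * D) := by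
  rw [(summable_pow_div_one_add_mul hz0 hz1 hD).tsum_eq_zero_add]
  simp

lemma pow_succ_div_one_add_mul_le (hz0 : 0 ≤ z) (hD : 0 < D) (n : ℕ) :
    z ^ (n + 1) / (1 + (n + 1) * D) ≤ z ^ (n + 1) / ((n + 1) * D) :=
  div_le_div_of_nonneg_left (by positivity) (by positivity) (by linarith)

lemma pow_succ_div_sub_le (hz0 : 0 ≤ z) (hz1 : z ≤ 1) (hD : 0 < D) (n : ℕ) :
    z ^ (n + 1) / ((n + 1) * D) - z ^ (n + 1) / (1 + (n + 1) * D)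
      ≤ z / D ^ 2 * (1 / ((n : ℝ) + 1) ^ 2) := by
  set m : ℝ := n + 1
  have hm : 0 < m := by positivity
  have hdiff : z ^ (n + 1) / (m * D) - z ^ (n + 1) / (1 + m * D)
      = z ^ (n + 1) / (m * D * (1 + m * D)) := by
    field_simp
    ring
  rw [hdiff]
  calc z ^ (n + 1) / (m * D * (1 + m * D)) ≤ z / (m * D * (m * D)) :=
        div_le_div₀ hz0 (pow_le_of_le_one hz0 hz1 n.succ_ne_zero) (by positivity)
          (by nlinarith [mul_pos hm hD])
    _ = z / D ^ 2 * (1 / m ^ 2) := by field_simp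

lemma summable_pow_succ_div_one_add_mul (hz0 : 0 ≤ z) (hz1 : z < 1) (hD : 0 < D) :
    Summable fun n : ℕ => z ^ (n + 1) / (1 + (n + 1) * D) :=
  (hasSum_pow_succ_div_succ_mul (abs_lt.mpr ⟨by linarith, hz1⟩)).summable.of_nonneg_of_le
    (fun n => by positivity) (pow_succ_div_one_add_mul_le hz0 hD)

lemma tsum_pow_div_one_add_mul_le (hz0 : 0 ≤ z) (hz1 : z < 1) (hD : 0 < D) :
    ∑' n : ℕ, z ^ n / (1 + n * D) ≤ 1 - log (1 - z) / D := by
  have hshift : ∑' n : ℕ, z ^ (n + 1) / (1 + (n + 1) * D) ≤ -log (1 - z) / D :=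
    hasSum_le (pow_succ_div_one_add_mul_le hz0 hD)
      (summable_pow_succ_div_one_add_mul hz0 hz1 hD).hasSum
      (hasSum_pow_succ_div_succ_mul (abs_lt.mpr ⟨by linarith, hz1⟩))
  rw [tsum_pow_div_one_add_mul_eq_one_add hz0 hz1 hD.le]
  linarith [neg_div D (log (1 - z))]

lemma sub_le_tsum_pow_div_one_add_mul (hz0 : 0 ≤ z) (hz1 : z < 1) (hD : 0 < D) :
    1 - log (1 - z) / D - z / D ^ 2 * (π ^ 2 / 6) ≤ ∑' n : ℕ, z ^ n / (1 + n * D) := by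
  have hgap : -log (1 - z) / D - ∑' n : ℕ, z ^ (n + 1) / (1 + (n + 1) * D)
      ≤ z / D ^ 2 * (π ^ 2 / 6) :=
    hasSum_le (pow_succ_div_sub_le hz0 hz1.le hD)
      ((hasSum_pow_succ_div_succ_mul (abs_lt.mpr ⟨by linarith, hz1⟩)).sub
        (summable_pow_succ_div_one_add_mul hz0 hz1 hD).hasSum)
      (hasSum_one_div_nat_succ_sq.mul_left _)
  rw [tsum_pow_div_one_add_mul_eq_one_add hz0 hz1 hD.le]
  linarith [neg_div D (log (1 - z))]

end LogSeries

section Parameters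

variable {p l : ℝ}

lemma one_sub_mul_pos (hp : p ∈ Set.Ioc (0 : ℝ) 1) (hl : l ∈ Set.Ioo (0 : ℝ) 1) :
    0 < 1 - (1 - p) * l := by
  nlinarith [hp.1, hp.2, hl.1, hl.2]

lemma mul_pow_div_one_sub_mul_mem_Ico (hp : p ∈ Set.Ioc (0 : ℝ) 1)
    (hl : l ∈ Set.Ioo (0 : ℝ) 1) {d : ℕ} (hd : d ≠ 0) :
    p * l ^ d / (1 - (1 - p) * l) ∈ Set.Ico (0 : ℝ) 1 := by
  have hc := one_sub_mul_pos hp hl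
  have hld : l ^ d ≤ l := pow_le_of_le_one hl.1.le hl.2.le hd
  refine ⟨div_nonneg (mul_nonneg hp.1.le (pow_nonneg hl.1.le d)) hc.le, ?_⟩
  rw [div_lt_one hc]
  nlinarith [hp.1, hl.2]

lemma div_mul_mul_pow_div_le (hp : p ∈ Set.Ioc (0 : ℝ) 1) (hl : 0 ≤ l) (c D : ℝ) (d : ℕ) :
    l / c * (p * l ^ d / c / D ^ 2) ≤ l ^ (d + 1) / (p * D ^ 2 * c ^ 2) := by
  have hX : 0 ≤ l ^ (d + 1) / (D ^ 2 * c ^ 2) := by positivity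
  calc l / c * (p * l ^ d / c / D ^ 2) = p * (l ^ (d + 1) / (D ^ 2 * c ^ 2)) := by ring
    _ ≤ l ^ (d + 1) / (D ^ 2 * c ^ 2) := mul_le_of_le_one_left hX hp.2
    _ ≤ l ^ (d + 1) / (D ^ 2 * c ^ 2) / p := le_div_self hX hp.1 hp.2
    _ = l ^ (d + 1) / (p * D ^ 2 * c ^ 2) := by field_simp

end Parameters

theorem stmt_17 (d : ℕ) (hd : 2 ≤ d) (p l : ℝ)
    (hp : p ∈ Set.Ioc (0:ℝ) 1) (hl : l ∈ Set.Ioo (0:ℝ) 1)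
    (z Q Qt : ℝ)
    (hz : z = p * l ^ d / (1 - (1 - p) * l))
    (hQ : Q = (l / (1 - (1 - p) * l)) *
      ∑' n : ℕ, z ^ n / (1 + (n : ℝ) * ((d:ℝ) - 1)))
    (hQt : Qt = (l / (1 - (1 - p) * l)) *
      (1 + Real.log ((1 - (1 - p) * l) / (1 - (1 - p) * l - p * l ^ d)) / ((d:ℝ) - 1))) :
    Qt - (l ^ (d + 1) / (p * ((d:ℝ) - 1) ^ 2 * (1 - (1 - p) * l) ^ 2)) *
        (Real.pi ^ 2 / 6) ≤ Q ∧ Q ≤ Qt := by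
  set c := 1 - (1 - p) * l
  set D := (d : ℝ) - 1
  have hc : 0 < c := one_sub_mul_pos hp hl
  have hD : 0 < D := sub_pos.mpr (Nat.one_lt_cast.mpr hd)
  obtain ⟨hz0, hz1⟩ : z ∈ Set.Ico (0 : ℝ) 1 :=
    hz ▸ mul_pow_div_one_sub_mul_mem_Ico hp hl (by omega)
  have hlog : log (c / (c - p * l ^ d)) = -log (1 - z) := by
    rw [← log_inv, hz, one_sub_div hc.ne', inv_div]
  have hlc : 0 ≤ l / c := div_nonneg hl.1.le hc.le
  rw [hQt, hQ, hlog, neg_div, ← sub_eq_add_neg]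
  refine ⟨?_, mul_le_mul_of_nonneg_left (tsum_pow_div_one_add_mul_le hz0 hz1 hD) hlc⟩
  calc l / c * (1 - log (1 - z) / D) - l ^ (d + 1) / (p * D ^ 2 * c ^ 2) * (π ^ 2 / 6)
      ≤ l / c * (1 - log (1 - z) / D) - l / c * (z / D ^ 2) * (π ^ 2 / 6) := by
        gcongr; rw [hz]; exact div_mul_mul_pow_div_le hp hl.1.le c D d
    _ = l / c * (1 - log (1 - z) / D - z / D ^ 2 * (π ^ 2 / 6)) := by ring
    _ ≤ l / c * ∑' n : ℕ, z ^ n / (1 + n * D) :=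
      mul_le_mul_of_nonneg_left (sub_le_tsum_pow_div_one_add_mul hz0 hz1 hD) hlc
end

section
/- For d ≥ 2 and p ∈ (0,1], with Q̃_λ = (λ/(1−(1−p)λ))(1 + log((1−(1−p)λ)/(1−(1−p)λ−pλ^d))/(d−1)), one has lim_{λ→1⁻} −Q̃_λ/log(1−λ) = 1/(p(d−1)). -/
/-!
Write `B = 1 - (1 - p) λ`. Since `B - p λ^d = (1 - λ) q(λ)` with
`q(λ) = 1 + p λ (1 + ⋯ + λ^(d-2))` and `q(1) = 1 + p (d - 1) > 0`, the logarithm in `Q̃_λ` is `-log (1 - λ)` plus a term that stays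
bounded as `λ → 1⁻`. Hence `-Q̃_λ / log (1 - λ) → (1 / B(1)) / (d - 1) = 1 / (p (d - 1))`.
-/

open Real Filter Set Topology

theorem one_sub_mul_sub_mul_pow_succ {R : Type*} [CommRing R] (p x : R) (n : ℕ) :
    1 - (1 - p) * x - p * x ^ (n + 1)
      = (1 - x) * (1 + p * x * ∑ i ∈ Finset.range n, x ^ i) := by
  linear_combination (p * x) * geom_sum_mul x n

theorem log_div_one_sub_mul_sub_mul_pow_succ {p x : ℝ} (hp : 0 ≤ p) (hx₀ : 0 ≤ x)
    (hx₁ : x < 1) (n : ℕ) :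
    log ((1 - (1 - p) * x) / (1 - (1 - p) * x - p * x ^ (n + 1)))
      = log (1 - (1 - p) * x) - log (1 + p * x * ∑ i ∈ Finset.range n, x ^ i)
        - log (1 - x) := by
  have h₁ : 0 < 1 - x := sub_pos.2 hx₁
  have hB : 0 < 1 - (1 - p) * x := by nlinarith
  have hq : 0 < 1 + p * x * ∑ i ∈ Finset.range n, x ^ i := by positivity
  rw [one_sub_mul_sub_mul_pow_succ, log_div hB.ne' (by positivity), log_mul h₁.ne' hq.ne']
  ring

theorem tendsto_log_one_sub_nhdsLT_one : Tendsto (fun x => log (1 - x)) (𝓝[<] 1) atBot := by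
  refine tendsto_log_nhdsGT_zero.comp <|
    tendsto_nhdsWithin_of_tendsto_nhds_of_eventually_within _ ?_ (eventually_nhdsWithin_of_forall fun x hx => mem_Ioi.2 (sub_pos.2 hx))
  simpa using ((continuous_sub_left (1 : ℝ)).tendsto 1).mono_left nhdsWithin_le_nhds

theorem tendsto_neg_mul_one_add_sub_div_div {α : Type*} {l : Filter α} {a k t : α → ℝ} {A K : ℝ}
    (m : ℝ) (ha : Tendsto a l (𝓝 A)) (hk : Tendsto k l (𝓝 K)) (ht : Tendsto t l atBot) :
    Tendsto (fun x => -(a x * (1 + (k x - t x) / m)) / t x) l (𝓝 (A / m)) := by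
  have hlim : Tendsto (fun x => a x * (m⁻¹ - (1 + k x / m) * (t x)⁻¹)) l
      (𝓝 (A * (m⁻¹ - (1 + K / m) * 0))) :=
    ha.mul (tendsto_const_nhds.sub
      ((tendsto_const_nhds.add (hk.div_const m)).mul (tendsto_inv_atBot_zero.comp ht)))
  rw [mul_zero, sub_zero, ← div_eq_mul_inv] at hlim
  refine hlim.congr' ?_
  filter_upwards [ht.eventually_ne_atBot 0] with x hx
  field_simp
  ring

theorem stmt_18 (d : ℕ) (hd : 2 ≤ d) (p : ℝ) (hp : p ∈ Set.Ioc (0:ℝ) 1) :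
    Filter.Tendsto
      (fun l : ℝ =>
        -((l / (1 - (1 - p) * l)) *
            (1 + Real.log ((1 - (1 - p) * l) / (1 - (1 - p) * l - p * l ^ d)) /
              ((d:ℝ) - 1))) / Real.log (1 - l))
      (nhdsWithin 1 (Set.Iio 1)) (nhds (1 / (p * ((d:ℝ) - 1)))) := by
  obtain ⟨n, rfl⟩ : ∃ n, d = n + 1 := ⟨d - 1, by omega⟩
  have hp₀ : 0 < p := hp.1
  have ha : Tendsto (fun l : ℝ => l / (1 - (1 - p) * l)) (𝓝[<] 1) (𝓝 (1 / p)) := by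
    have hc : ContinuousAt (fun l : ℝ => l / (1 - (1 - p) * l)) 1 :=
      continuousAt_id.div (by fun_prop) (by simpa using hp₀.ne')
    simpa using hc.tendsto.mono_left nhdsWithin_le_nhds
  have hk : Tendsto (fun l : ℝ => log (1 - (1 - p) * l)
      - log (1 + p * l * ∑ i ∈ Finset.range n, l ^ i)) (𝓝[<] 1)
      (𝓝 (log p - log (1 + p * n))) := by
    have hc : ContinuousAt (fun l : ℝ => log (1 - (1 - p) * l)
        - log (1 + p * l * ∑ i ∈ Finset.range n, l ^ i)) 1 := by
      refine ((continuousAt_log ?_).comp (by fun_prop)).sub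
        ((continuousAt_log ?_).comp (by fun_prop))
      · simpa using hp₀.ne'
      · simp only [one_pow, Finset.sum_const, Finset.card_range, nsmul_eq_mul, mul_one]
        positivity
    simpa using hc.tendsto.mono_left nhdsWithin_le_nhds
  rw [Nat.cast_succ, add_sub_cancel_right, ← div_div]
  refine (tendsto_neg_mul_one_add_sub_div_div (n : ℝ) ha hk
    tendsto_log_one_sub_nhdsLT_one).congr' ?_
  filter_upwards [Ioo_mem_nhdsLT zero_lt_one] with l ⟨hl₀, hl₁⟩
  rw [log_div_one_sub_mul_sub_mul_pow_succ hp₀.le hl₀.le hl₁]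
end
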